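/- Let I_1,…,I_m be nonempty subsets of [n] and suppose the bipartite graph H on left vertex set [m] and right vertex set [n], with an edge between left vertex i and right vertex j exactly when j ∈ I_i, is a forest (contains no cycle). Let Π := Δ_{I_1} + ⋯ + Δ_{I_m} ⊂ ℝ^n. Then every lattice point of Π is a vertex (extreme point) of Π, and every lattice point of Π has the form e_{j_1} + ⋯ + e_{j_m} for some indices j_1,…,j_m with j_i ∈ I_i for each i ∈ [m]. -/

import Mathlib

open Pointwise

noncomputable section

/-- The simplex `Δ_I := conv(e_i : i ∈ I)` in `ℝ^n`. -/
def simpA (n : ℕ) (I : Finset (Fin n)) : Set (Fin n → ℝ) :=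
  convexHull ℝ ((fun j => Pi.single j (1 : ℝ)) '' ↑I)

/-- The lattice points `ℤ^n ⊆ ℝ^n`. -/
def latt (n : ℕ) : Set (Fin n → ℝ) := {x | ∀ j, ∃ z : ℤ, x j = (z : ℝ)}

/-- The bipartite graph on left vertices `[m]` and right vertices `[n]`, with an edge between
left vertex `i` and right vertex `j` exactly when `j ∈ I_i`. -/
def bipG (m n : ℕ) (I : Fin m → Finset (Fin n)) : SimpleGraph (Fin m ⊕ Fin n) where
  Adj u v :=
    (∃ i j, u = Sum.inl i ∧ v = Sum.inr j ∧ j ∈ I i) ∨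
    (∃ i j, u = Sum.inr j ∧ v = Sum.inl i ∧ j ∈ I i)
  symm := by
    refine ⟨?_⟩
    rintro u v (⟨i, j, rfl, rfl, h⟩ | ⟨i, j, rfl, rfl, h⟩)
    · exact Or.inr ⟨i, j, rfl, rfl, h⟩
    · exact Or.inl ⟨i, j, rfl, rfl, h⟩
  loopless := by
    refine ⟨?_⟩
    rintro u (⟨i, j, rfl, h, -⟩ | ⟨i, j, rfl, h, -⟩) <;> simp at h

/-!
Write a lattice point `x = y_1 + ⋯ + y_m` with `y_i ∈ Δ_{I_i}` and view `(y_i j)` as an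
`m × n` matrix supported on the edges of the forest `H`. Its row sums are `1` and its column
sums are the integers `x_j`. The non-integral entries span a subforest of `H`; a leaf of it
would be the only non-integral entry in its row or column, which is impossible when that line
sums to an integer. So every `y_i` is an integral point of a simplex, i.e. a vertex `e_{j_i}`.
Extremality follows by the same argument: if `x` lies in an open segment `]a, b[` of `Π`,
averaging the summands of `a` and `b` gives another decomposition of `x`, whose summands are
vertices of the simplices, and vertices can only be averaged from themselves.
-/

theorem SimpleGraph.IsAcyclic.exists_existsUnique_adj {V : Type*} [Finite V]
    {G : SimpleGraph V} (hG : G.IsAcyclic) (hne : G ≠ ⊥) : ∃ v, ∃! w, G.Adj v w := by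
  obtain ⟨a, b, hab⟩ := SimpleGraph.ne_bot_iff_exists_adj.mp hne
  have : Nonempty V := ⟨a⟩
  -- the start of a longest path is a leaf
  obtain ⟨u, v, p, hp, hlongest⟩ := SimpleGraph.Walk.exists_isPath_forall_isPath_length_le_length G
  have hnil : ¬p.Nil := fun h => by
    have := hlongest a b (.cons hab .nil) (by simp [hab.ne])
    simp [SimpleGraph.Walk.length_eq_zero_iff.mpr h] at this
  refine ⟨u, p.snd, p.adj_snd hnil, fun w huw => hG.eq_snd_of_adj_start hp huw ?_⟩
  by_contra hw
  have := hlongest w v (.cons huw.symm p) (hp.cons hw)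
  simp at this

lemma bipG_mono {m n : ℕ} {J I : Fin m → Finset (Fin n)} (h : ∀ i, J i ⊆ I i) :
    bipG m n J ≤ bipG m n I := by
  rintro u v (⟨i, j, rfl, rfl, hj⟩ | ⟨i, j, rfl, rfl, hj⟩)
  · exact Or.inl ⟨i, j, rfl, rfl, h i hj⟩
  · exact Or.inr ⟨i, j, rfl, rfl, h i hj⟩

lemma exists_ne_notMem_of_sum_mem {ι M : Type*} [AddCommGroup M] {G : AddSubgroup M}
    {s : Finset ι} {f : ι → M} {a : ι} (hs : ∑ i ∈ s, f i ∈ G) (ha : a ∈ s) (hfa : f a ∉ G) :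
    ∃ b ∈ s, b ≠ a ∧ f b ∉ G := by
  classical
  by_contra! h
  have hrest : ∑ i ∈ s.erase a, f i ∈ G :=
    G.sum_mem fun b hb => h b (Finset.mem_of_mem_erase hb) (Finset.ne_of_mem_erase hb)
  rw [← Finset.add_sum_erase s f ha] at hs
  exact hfa (by simpa using G.sub_mem hs hrest)

theorem mem_of_isAcyclic_bipG {m n : ℕ} {M : Type*} [AddCommGroup M] (G : AddSubgroup M)
    (t : Fin m → Fin n → M) (hrow : ∀ i, ∑ j, t i j ∈ G) (hcol : ∀ j, ∑ i, t i j ∈ G)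
    {I : Fin m → Finset (Fin n)} (hsupp : ∀ i j, t i j ∉ G → j ∈ I i)
    (hforest : (bipG m n I).IsAcyclic) (i : Fin m) (j : Fin n) : t i j ∈ G := by
  classical
  set F := bipG m n fun i => {j | t i j ∉ G}
  have hF : F.IsAcyclic :=
    hforest.anti (bipG_mono fun i j hj => hsupp i j (by simpa using hj))
  by_contra hij
  obtain ⟨v, w, hvw, hleaf⟩ := hF.exists_existsUnique_adj <|
    SimpleGraph.ne_bot_iff_exists_adj.mpr ⟨.inl i, .inr j, .inl ⟨i, j, rfl, rfl, by simpa⟩⟩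
  rcases hvw with ⟨i, j, rfl, rfl, hj⟩ | ⟨i, j, rfl, rfl, hj⟩
  · obtain ⟨j', -, hj'j, hj'⟩ :=
      exists_ne_notMem_of_sum_mem (hrow i) (Finset.mem_univ j) (by simpa using hj)
    exact hj'j (Sum.inr_injective (hleaf _ (.inl ⟨i, j', rfl, rfl, by simpa⟩)))
  · obtain ⟨i', -, hi'i, hi'⟩ :=
      exists_ne_notMem_of_sum_mem (hcol j) (Finset.mem_univ i) (by simpa using hj)
    exact hi'i (Sum.inl_injective (hleaf _ (.inr ⟨i', j, rfl, rfl, by simpa⟩)))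

section StdSimplex

variable {ι : Type*} [Fintype ι] [DecidableEq ι]

lemma eq_single_of_mem_stdSimplex_of_one_le {y : ι → ℝ} (hy : y ∈ stdSimplex ℝ ι) {k : ι}
    (hk : 1 ≤ y k) : y = Pi.single k 1 := by
  funext c
  rcases eq_or_ne c k with rfl | hck
  · simpa using le_antisymm (mem_Icc_of_mem_stdSimplex hy c).2 hk
  · have := Finset.add_le_sum (fun i _ => hy.1 i) (Finset.mem_univ c) (Finset.mem_univ k) hck
    rw [hy.2] at this
    simp [hck, le_antisymm (by linarith) (hy.1 c)]

lemma single_mem_extremePoints_stdSimplex (k : ι) :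
    Pi.single k 1 ∈ (stdSimplex ℝ ι).extremePoints ℝ := by
  refine mem_extremePoints_iff_left.mpr ⟨single_mem_stdSimplex ℝ k, fun a ha b hb hab => ?_⟩
  obtain ⟨θ, η, hθ, hη, hθη, hk⟩ := hab
  have hk := congrFun hk k
  simp only [Pi.add_apply, Pi.smul_apply, smul_eq_mul, Pi.single_eq_same] at hk
  have hbk := (mem_Icc_of_mem_stdSimplex hb k).2
  exact eq_single_of_mem_stdSimplex_of_one_le ha (by nlinarith)

lemma exists_eq_single_of_mem_stdSimplex {y : ι → ℝ} (hy : y ∈ stdSimplex ℝ ι)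
    (hint : ∀ c, y c ∈ (Int.castAddHom ℝ).range) : ∃ k, y = Pi.single k 1 := by
  obtain ⟨k, -, hk⟩ := Finset.exists_ne_zero_of_sum_ne_zero (hy.2.trans_ne one_ne_zero)
  obtain ⟨z, hz : (z : ℝ) = y k⟩ := hint k
  have hpos : (0 : ℝ) < z := hz ▸ (hy.1 k).lt_of_ne' hk
  refine ⟨k, eq_single_of_mem_stdSimplex_of_one_le hy (hz ▸ ?_)⟩
  exact_mod_cast (show (1 : ℤ) ≤ z by exact_mod_cast hpos)

end StdSimplex

section Simplex

variable {n : ℕ} {I : Finset (Fin n)}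

lemma simpA_subset_stdSimplex : simpA n I ⊆ stdSimplex ℝ (Fin n) := by
  rw [← convexHull_rangle_single_eq_stdSimplex]
  exact convexHull_mono (Set.image_subset_range _ _)

lemma eq_zero_of_mem_simpA {y : Fin n → ℝ} (hy : y ∈ simpA n I) {j : Fin n} (hj : j ∉ I) :
    y j = 0 := by
  refine convexHull_min (t := {y | y j = 0}) ?_ ?_ hy
  · rintro _ ⟨k, hk, rfl⟩
    exact Pi.single_eq_of_ne (ne_of_mem_of_not_mem hk hj).symm _
  · intro a ha b hb θ η _ _ _
    simp_all

lemma single_mem_extremePoints_simpA {k : Fin n} (hk : k ∈ I) :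
    Pi.single k 1 ∈ (simpA n I).extremePoints ℝ :=
  inter_extremePoints_subset_extremePoints_of_subset simpA_subset_stdSimplex
    ⟨subset_convexHull ℝ _ ⟨k, hk, rfl⟩, single_mem_extremePoints_stdSimplex k⟩

end Simplex

theorem mem_extremePoints_sum {ι E : Type*} [Fintype ι] [AddCommGroup E] [Module ℝ E]
    {A : ι → Set E} (hA : ∀ i, Convex ℝ (A i)) {x : E} (hx : x ∈ ∑ i, A i)
    (hdecomp : ∀ w : ι → E, (∀ i, w i ∈ A i) → ∑ i, w i = x → ∀ i, w i ∈ (A i).extremePoints ℝ) :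
    x ∈ (∑ i, A i).extremePoints ℝ := by
  refine mem_extremePoints_iff_left.mpr ⟨hx, fun a ha b hb hab => ?_⟩
  obtain ⟨a', ha', rfl⟩ := (Set.mem_fintype_sum _ _).mp ha
  obtain ⟨b', hb', rfl⟩ := (Set.mem_fintype_sum _ _).mp hb
  obtain ⟨θ, η, hθ, hη, hθη, rfl⟩ := hab
  set w := fun i => θ • a' i + η • b' i
  have hw : ∀ i, w i ∈ A i := fun i => hA i (ha' i) (hb' i) hθ.le hη.le hθη
  have hwsum : ∑ i, w i = θ • ∑ i, a' i + η • ∑ i, b' i := by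
    simp only [w, Finset.sum_add_distrib, Finset.smul_sum]
  rw [← hwsum]
  refine Finset.sum_congr rfl fun i _ => ?_
  exact mem_extremePoints_iff_left.mp (hdecomp w hw hwsum i) |>.2 _ (ha' i) _ (hb' i)
    ⟨θ, η, hθ, hη, hθη, rfl⟩

theorem exists_eq_single_of_sum_mem_latt {n m : ℕ} {I : Fin m → Finset (Fin n)}
    (hforest : (bipG m n I).IsAcyclic) {y : Fin m → Fin n → ℝ}
    (hy : ∀ i, y i ∈ simpA n (I i)) (hx : ∑ i, y i ∈ latt n) :
    ∃ j : Fin m → Fin n, (∀ i, j i ∈ I i) ∧ ∀ i, y i = Pi.single (j i) 1 := by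
  have hint : ∀ i c, y i c ∈ (Int.castAddHom ℝ).range := by
    refine mem_of_isAcyclic_bipG _ y (fun i => ?_) (fun c => ?_) (fun i c hc => ?_) hforest
    · rw [(simpA_subset_stdSimplex (hy i)).2]
      exact ⟨1, by simp⟩
    · obtain ⟨z, hz⟩ := hx c
      exact ⟨z, by simp [← Finset.sum_apply, hz]⟩
    · by_contra hcI
      exact hc (eq_zero_of_mem_simpA (hy i) hcI ▸ zero_mem _)
  choose j hj using fun i => exists_eq_single_of_mem_stdSimplex (simpA_subset_stdSimplex (hy i))
    (hint i)
  refine ⟨j, fun i => ?_, hj⟩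
  by_contra hjI
  simpa [hj i] using eq_zero_of_mem_simpA (hy i) hjI

theorem stmt16_general (n m : ℕ) (I : Fin m → Finset (Fin n))
    (hforest : (bipG m n I).IsAcyclic)
    (x : Fin n → ℝ) (hx : x ∈ (∑ i : Fin m, simpA n (I i)) ∩ latt n) :
    x ∈ Set.extremePoints ℝ (∑ i : Fin m, simpA n (I i)) ∧
    ∃ j : Fin m → Fin n, (∀ i, j i ∈ I i) ∧ x = ∑ i, Pi.single (j i) (1 : ℝ) := by
  obtain ⟨hxPi, hxL⟩ := hx
  refine ⟨mem_extremePoints_sum (fun i => convex_convexHull ℝ _) hxPi fun w hw hwx i => ?_, ?_⟩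
  · obtain ⟨k, hkI, hk⟩ := exists_eq_single_of_sum_mem_latt hforest hw (hwx ▸ hxL)
    exact hk i ▸ single_mem_extremePoints_simpA (hkI i)
  · obtain ⟨y, hy, rfl⟩ := (Set.mem_fintype_sum _ _).mp hxPi
    obtain ⟨j, hjI, hj⟩ := exists_eq_single_of_sum_mem_latt hforest hy hxL
    exact ⟨j, hjI, Finset.sum_congr rfl fun i _ => hj i⟩

/-- If the bipartite graph associated to nonempty `I_1,…,I_m ⊆ [n]` is a forest,
then every lattice point of `Π := Δ_{I_1} + ⋯ + Δ_{I_m}` is an extreme point (vertex) of `Π`,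
and has the form `e_{j_1} + ⋯ + e_{j_m}` with `j_i ∈ I_i` for each `i`. -/
theorem stmt16 (n m : ℕ) (I : Fin m → Finset (Fin n)) (hI : ∀ i, (I i).Nonempty)
    (hforest : (bipG m n I).IsAcyclic)
    (x : Fin n → ℝ) (hx : x ∈ (∑ i : Fin m, simpA n (I i)) ∩ latt n) :
    x ∈ Set.extremePoints ℝ (∑ i : Fin m, simpA n (I i)) ∧
    ∃ j : Fin m → Fin n, (∀ i, j i ∈ I i) ∧ x = ∑ i, Pi.single (j i) (1 : ℝ) :=
  stmt16_general n m I hforest x hx
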